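/- arXiv:0704.2749 — 2 statements merged into one kernel-verified Lean document; each statement's English description precedes it below -/
import Mathlib

section
/- Let n > 2, let (G,f) be an n-ary groupoid, and let x ↦ x̄ be a unary operation on G. Then the following identities hold for some fixed i, j ∈ {2,…,n}: (1) f(x,…,x, x̄, x,…,x, y) = y (with i−2 copies of x before x̄ and n−i copies after), (2) f(y, x,…,x, x̄, x,…,x) = y (with n−j copies of x before x̄ and j−2 copies after), and (3) f(f(x_1,…,x_n), x_{n+1},…,x_{2n−1}) = f(x_1, f(x_2,…,x_{n+1}), x_{n+2},…,x_{2n−1}), if and only if (G,f) is an n-ary group and x̄ is the skew element of x for every x ∈ G. -/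
section NAry

variable {G : Type*}

/-- The result of substituting the "inner" application of `f` at 0-based position `i`
into the sequence `x` of `2n-1` arguments (indexed by naturals). -/
def applyAt (n : ℕ) (f : (Fin n → G) → G) (x : ℕ → G) (i : ℕ) : G :=
  f fun j => if (j : ℕ) < i then x (j : ℕ)
    else if (j : ℕ) = i then f (fun t => x (i + (t : ℕ)))
    else x ((j : ℕ) + n - 1)

/-- `(i+1,j+1)`-associativity (0-based positions `i` and `j`). -/
def IsAssocAt (n : ℕ) (f : (Fin n → G) → G) (i j : ℕ) : Prop :=
  ∀ x : ℕ → G, applyAt n f x i = applyAt n f x j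

/-- `f` is associative: all the `(i,j)`-associative laws hold. -/
def IsNAssoc (n : ℕ) (f : (Fin n → G) → G) : Prop :=
  ∀ i j : ℕ, i < n → j < n → IsAssocAt n f i j

/-- The equation `f(x₁,…,x_{i}, z, x_{i+2},…,x_n) = x₀` is uniquely solvable at the
0-based place `i`. -/
def IsUSolv (n : ℕ) (f : (Fin n → G) → G) (i : ℕ) : Prop :=
  ∀ (x : Fin n → G) (x₀ : G), ∃! z : G, f (fun m => if (m : ℕ) = i then z else x m) = x₀

/-- The equation `f(x₁,…,x_{i}, z, x_{i+2},…,x_n) = x₀` is solvable at the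
0-based place `i`. -/
def IsSolv (n : ℕ) (f : (Fin n → G) → G) (i : ℕ) : Prop :=
  ∀ (x : Fin n → G) (x₀ : G), ∃ z : G, f (fun m => if (m : ℕ) = i then z else x m) = x₀

/-- An `n`-ary group: associative and uniquely solvable at every place. -/
def IsNAryGroup (n : ℕ) (f : (Fin n → G) → G) : Prop :=
  IsNAssoc n f ∧ ∀ i : ℕ, i < n → IsUSolv n f i

/-- `bar` is the skew-element operation: `f(x,…,x, bar x) = x` (with `n-1` copies of `x`). -/
def IsSkewOf (n : ℕ) (f : (Fin n → G) → G) (bar : G → G) : Prop :=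
  ∀ x : G, f (fun m => if (m : ℕ) = n - 1 then bar x else x) = x

end NAry

/-!
Encode tuples as lists, so that `F l` applies `f` to a list `l` of length `n`, and call a
sequence `s` of length `n - 1` neutral if `F (s ++ [y]) = y = F (y :: s)` for all `y`. The two
Dörnte identities say that `x^(i-2) x̄ x^(n-i)` is left neutral and `x^(n-j) x̄ x^(j-2)` is right
neutral. A right neutral sequence makes `F` cancellative in its first argument, and this lifts the
`(1,2)`-associative law to every `(k,k+1)`-law, hence to full associativity. Once `F` is
associative, one-sided neutral sequences are two-sided, and a neutral `a :: t` rotates to a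
neutral `t ++ [a]` as soon as `a` also ends some neutral sequence; rotating `x^k x̄ x^m` shows
that both `x^(n-2) x̄` (so `x̄` is the skew element) and `x̄ x^(n-2)` are neutral. Every sequence
shorter than `n - 1` then extends on either side to a neutral one, and these extensions write
down inverses of the translations `z ↦ F (a ++ z :: b)`. Conversely, in an `n`-ary group
cancellation makes `x^(n-2) x̄` neutral, which gives the identities with `i = n` and `j = 2`.
-/

namespace NAry

open List Function

variable {G : Type*}

section ListOperation

variable (F : List G → G) (n : ℕ)

def IsLeftNeutral (s : List G) : Prop := ∀ y, F (s ++ [y]) = y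

def IsRightNeutral (s : List G) : Prop := ∀ y, F (y :: s) = y

structure IsNeutral (s : List G) : Prop where
  length_eq : s.length = n - 1
  left : IsLeftNeutral F s
  right : IsRightNeutral F s

/-- All `(i,j)`-associative laws at once: the inner `F` of `F (u ++ F v :: w)` sits in position
`u.length`. -/
def IsListAssoc : Prop :=
  ∀ u v w u' v' w' : List G, v.length = n → v'.length = n → u.length + w.length + 1 = n →
    u ++ v ++ w = u' ++ v' ++ w' → F (u ++ F v :: w) = F (u' ++ F v' :: w')

/-- The `(k+1, k+2)`-associative law. -/
def IsAssocSucc (k : ℕ) : Prop :=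
  ∀ u a v b w, u.length = k → v.length = n - 1 → k + w.length + 2 = n →
    F (u ++ F (a :: v) :: b :: w) = F (u ++ a :: F (v ++ [b]) :: w)

def dual : List G → G := fun l => F l.reverse

def SkewNeutral (bar : G → G) (k m : ℕ) : Prop :=
  ∀ x, IsNeutral F n (replicate k x ++ bar x :: replicate m x)

def HasNeutralCompletions : Prop :=
  ∀ x, (∃ t, IsNeutral F n (x :: t)) ∧ ∃ t, IsNeutral F n (t ++ [x])

variable {F n}

@[simp] theorem dual_apply (l : List G) : dual F l = F l.reverse := rfl

theorem IsListAssoc.dual (hF : IsListAssoc F n) : IsListAssoc (dual F) n := by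
  intro u v w u' v' w' hv hv' hw h
  simpa using hF w.reverse v.reverse u.reverse w'.reverse v'.reverse u'.reverse
    (by simpa using hv) (by simpa using hv') (by simp; omega) (by simpa using congrArg reverse h)

theorem isLeftNeutral_dual {s : List G} :
    IsLeftNeutral (dual F) s.reverse ↔ IsRightNeutral F s := by
  simp [IsLeftNeutral, IsRightNeutral]

theorem isRightNeutral_dual {s : List G} :
    IsRightNeutral (dual F) s.reverse ↔ IsLeftNeutral F s := by
  simp [IsLeftNeutral, IsRightNeutral]

theorem isNeutral_dual {s : List G} : IsNeutral (dual F) n s.reverse ↔ IsNeutral F n s :=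
  ⟨fun h => ⟨by simpa using h.length_eq, isRightNeutral_dual.1 h.right,
      isLeftNeutral_dual.1 h.left⟩,
    fun h => ⟨by simpa using h.length_eq, isLeftNeutral_dual.2 h.right,
      isRightNeutral_dual.2 h.left⟩⟩

theorem IsAssocSucc.of_zero (h₀ : IsAssocSucc F n 0) {r : List G} (hr : r.length = n - 1)
    (hrn : IsRightNeutral F r) (k : ℕ) : IsAssocSucc F n k := by
  have h₀' : ∀ a v b w, v.length = n - 1 → w.length + 2 = n →
      F (F (a :: v) :: b :: w) = F (a :: F (v ++ [b]) :: w) := fun a v b w hv hw => by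
    simpa using h₀ [] a v b w rfl hv (by omega)
  induction k with
  | zero => exact h₀
  | succ k ih =>
    intro u a v b w hu hv hw
    obtain ⟨c, u, rfl⟩ := exists_cons_of_length_pos (by omega : 0 < u.length)
    obtain ⟨r₀, r', rfl⟩ := exists_cons_of_length_pos (by omega : 0 < r.length)
    simp only [length_cons] at hu hr
    -- `r` is right neutral, and inside `F (· :: r)` the `(1,2)`-law moves the window back to `k`
    calc F (c :: u ++ F (a :: v) :: b :: w)
        = F (F (c :: (u ++ F (a :: v) :: b :: w)) :: r₀ :: r') := (hrn _).symm
      _ = F (c :: F (u ++ F (a :: v) :: b :: (w ++ [r₀])) :: r') := by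
        rw [h₀' _ _ _ _ (by simp; omega) (by omega)]; simp
      _ = F (c :: F (u ++ a :: F (v ++ [b]) :: (w ++ [r₀])) :: r') := by
        rw [ih u a v b _ (by omega) hv (by simp; omega)]
      _ = F (F (c :: (u ++ a :: F (v ++ [b]) :: w)) :: r₀ :: r') := by
        rw [h₀' _ _ _ _ (by simp; omega) (by omega)]; simp
      _ = F (c :: u ++ a :: F (v ++ [b]) :: w) := hrn _

theorem isListAssoc_of_isAssocSucc (h : ∀ k, IsAssocSucc F n k) : IsListAssoc F n := by
  have hmove : ∀ c u v w v' w' : List G, v.length = n → v'.length = n →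
      u.length + w.length + 1 = n → v ++ w = c ++ v' ++ w' →
      F (u ++ F v :: w) = F (u ++ c ++ F v' :: w') := by
    intro c
    induction c with
    | nil =>
      intro u v w v' w' hv hv' _ h
      obtain ⟨rfl, rfl⟩ := append_inj h (hv.trans hv'.symm)
      simp
    | cons a c ih =>
      intro u v w v' w' hv hv' hw hvw
      have hlen := congrArg length hvw
      simp only [length_append, length_cons] at hlen
      obtain ⟨a', v, rfl⟩ := exists_cons_of_length_pos (by omega : 0 < v.length)
      obtain ⟨b, w, rfl⟩ := exists_cons_of_length_pos (by simp at hlen hv; omega : 0 < w.length)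
      simp only [cons_append, cons.injEq] at hvw
      obtain ⟨rfl, hvw⟩ := hvw
      simp only [length_cons] at hv hw
      rw [h u.length u a' v b w rfl (by omega) (by omega)]
      simpa using ih (u ++ [a']) (v ++ [b]) w v' w' (by simp; omega) hv' (by simp; omega)
        (by simpa using hvw)
  intro u v w u' v' w' hv hv' hw h
  rw [append_assoc, append_assoc, append_eq_append_iff] at h
  rcases h with ⟨c, rfl, h⟩ | ⟨c, rfl, h⟩
  · simpa using hmove c u v w v' w' hv hv' hw (by simpa using h)
  · have hlen := congrArg length h
    simp only [length_append] at hlen hw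
    simpa using (hmove c u' v' w' v w hv' hv (by omega) (by simpa using h)).symm

theorem IsListAssoc.isNeutral_of_isRightNeutral (hF : IsListAssoc F n) {s e : List G}
    (hs : s.length = n - 1) (hsr : IsRightNeutral F s) (he : e.length = n - 1)
    (hel : IsLeftNeutral F e) : IsNeutral F n s := by
  refine ⟨hs, fun y => ?_, hsr⟩
  rcases e.eq_nil_or_concat with rfl | ⟨e, a, rfl⟩
  · rw [eq_nil_of_length_eq_zero (hs.trans he.symm)]
    exact hel y
  simp only [concat_eq_append, length_append, length_singleton] at he hel
  calc F (s ++ [y]) = F ((e ++ [a]) ++ [F (s ++ [y])]) := (hel _).symm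
    _ = F (e ++ F (a :: s) :: [y]) :=
      hF _ _ [] _ _ _ (by simp; omega) (by simp; omega) (by simp; omega) (by simp)
    _ = y := by rw [hsr]; simpa using hel y

theorem IsListAssoc.isNeutral_of_isLeftNeutral (hF : IsListAssoc F n) {s e : List G}
    (hs : s.length = n - 1) (hsl : IsLeftNeutral F s) (he : e.length = n - 1)
    (her : IsRightNeutral F e) : IsNeutral F n s := by
  rw [← isNeutral_dual]
  exact hF.dual.isNeutral_of_isRightNeutral (by simpa using hs) (isRightNeutral_dual.2 hsl)
    (e := e.reverse) (by simpa using he) (isLeftNeutral_dual.2 her)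

theorem IsListAssoc.isNeutral_rotate_cons (hF : IsListAssoc F n) {a : G} {t u : List G}
    (hat : IsNeutral F n (a :: t)) (hua : IsNeutral F n (u ++ [a])) :
    IsNeutral F n (t ++ [a]) := by
  have ht := hat.length_eq
  have hu := hua.length_eq
  simp only [length_cons, length_append, length_nil] at ht hu
  refine hF.isNeutral_of_isLeftNeutral (by simp; omega) (fun y => ?_) hat.length_eq hat.right
  calc F (t ++ [a] ++ [y]) = F ((u ++ [a]) ++ [F (t ++ [a] ++ [y])]) := (hua.left _).symm
    _ = F (u ++ F (a :: t ++ [a]) :: [y]) :=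
      hF _ _ [] _ _ _ (by simp; omega) (by simp; omega) (by simp; omega) (by simp)
    _ = y := by rw [hat.left]; simpa using hua.left y

theorem IsListAssoc.isNeutral_rotate_concat (hF : IsListAssoc F n) {a : G} {t u : List G}
    (hta : IsNeutral F n (t ++ [a])) (hau : IsNeutral F n (a :: u)) :
    IsNeutral F n (a :: t) := by
  rw [← isNeutral_dual] at hta hau ⊢
  simpa using hF.dual.isNeutral_rotate_cons (by simpa using hta) (u := u.reverse)
    (by simpa using hau)

variable {bar : G → G}

theorem SkewNeutral.shift_left (hF : IsListAssoc F n) {k m : ℕ}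
    (h : SkewNeutral F n bar (k + 1) (m + 1)) : SkewNeutral F n bar k (m + 2) := by
  intro x
  have h₁ : IsNeutral F n (x :: (replicate k x ++ bar x :: replicate (m + 1) x)) := by
    simpa [replicate_succ] using h x
  have h₂ : IsNeutral F n ((replicate (k + 1) x ++ bar x :: replicate m x) ++ [x]) := by
    simpa [replicate_succ'] using h x
  simpa [replicate_succ'] using hF.isNeutral_rotate_cons h₁ h₂

theorem SkewNeutral.last_of_first (hF : IsListAssoc F n) {m : ℕ}
    (h : SkewNeutral F n bar 0 (m + 1)) : SkewNeutral F n bar (m + 1) 0 := by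
  intro x
  have h₁ : IsNeutral F n (bar x :: replicate (m + 1) x) := by simpa using h x
  have h₂ : IsNeutral F n ((bar (bar x) :: replicate m (bar x)) ++ [bar x]) := by
    simpa [replicate_succ'] using h (bar x)
  simpa using hF.isNeutral_rotate_cons h₁ h₂

theorem SkewNeutral.first_of_last (hF : IsListAssoc F n) {m : ℕ}
    (h : SkewNeutral F n bar (m + 1) 0) : SkewNeutral F n bar 0 (m + 1) := by
  intro x
  have h₁ : IsNeutral F n (replicate (m + 1) x ++ [bar x]) := by simpa using h x
  have h₂ : IsNeutral F n (bar x :: (replicate m (bar x) ++ [bar (bar x)])) := by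
    simpa [replicate_succ] using h (bar x)
  simpa using hF.isNeutral_rotate_concat h₁ h₂

theorem SkewNeutral.first_and_last (hF : IsListAssoc F n) {k m : ℕ}
    (h : SkewNeutral F n bar k m) (hkm : 0 < k + m) :
    SkewNeutral F n bar 0 (k + m) ∧ SkewNeutral F n bar (k + m) 0 := by
  induction k generalizing m with
  | zero =>
    rw [Nat.zero_add] at hkm ⊢
    obtain ⟨m, rfl⟩ := Nat.exists_eq_add_one_of_ne_zero hkm.ne'
    exact ⟨h, h.last_of_first hF⟩
  | succ k ih =>
    rcases m with _ | m
    · exact ⟨h.first_of_last hF, h⟩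
    · simpa [Nat.add_assoc, Nat.add_comm 1] using ih (h.shift_left hF) (by omega)

theorem IsAssocSucc.isListAssoc_skewNeutral [Nonempty G] (h₀ : IsAssocSucc F n 0) (hn : 3 ≤ n)
    {k m k' m' : ℕ} (hkm : k + m + 2 = n) (hk'm' : k' + m' + 2 = n)
    (hL : ∀ x, IsLeftNeutral F (replicate k x ++ bar x :: replicate m x))
    (hR : ∀ x, IsRightNeutral F (replicate k' x ++ bar x :: replicate m' x)) :
    IsListAssoc F n ∧ SkewNeutral F n bar 0 (n - 2) ∧ SkewNeutral F n bar (n - 2) 0 := by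
  have hF := isListAssoc_of_isAssocSucc (h₀.of_zero (by simp; omega) (hR (Classical.arbitrary G)))
  have h : SkewNeutral F n bar k m := fun x =>
    hF.isNeutral_of_isLeftNeutral (by simp; omega) (hL x) (by simp; omega) (hR x)
  rw [show n - 2 = k + m by omega]
  exact ⟨hF, h.first_and_last hF (by omega)⟩

theorem SkewNeutral.hasNeutralCompletions {m : ℕ} (h₀ : SkewNeutral F n bar 0 m)
    (h₁ : SkewNeutral F n bar m 0) (hm : 0 < m) : HasNeutralCompletions F n := by
  obtain ⟨m, rfl⟩ := Nat.exists_eq_add_one_of_ne_zero hm.ne'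
  exact fun x => ⟨⟨replicate m x ++ [bar x], by simpa [replicate_succ] using h₁ x⟩,
    ⟨bar x :: replicate m x, by simpa [replicate_succ'] using h₀ x⟩⟩

theorem HasNeutralCompletions.dual (h : HasNeutralCompletions F n) :
    HasNeutralCompletions (dual F) n := by
  intro x
  obtain ⟨⟨t, ht⟩, ⟨t', ht'⟩⟩ := h x
  exact ⟨⟨t'.reverse, by simpa using isNeutral_dual.2 ht'⟩,
    ⟨t.reverse, by simpa using isNeutral_dual.2 ht⟩⟩

theorem IsListAssoc.exists_isNeutral_append (hF : IsListAssoc F n)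
    (hc : HasNeutralCompletions F n) :
    ∀ s : List G, s ≠ [] → s.length < n - 1 → ∃ t, IsNeutral F n (s ++ t) := by
  intro s
  induction s with
  | nil => intro h; exact absurd rfl h
  | cons x s ih =>
    intro _ hs
    obtain ⟨d, hd⟩ := (hc x).1
    rcases eq_or_ne s [] with rfl | hs₀
    · exact ⟨d, hd⟩
    obtain ⟨c, hc⟩ := ih hs₀ (by simp at hs; omega)
    have hc_len := hc.length_eq
    have hd_len := hd.length_eq
    simp only [length_cons, length_append] at hs hc_len hd_len
    obtain ⟨d₀, d', rfl⟩ := exists_cons_of_length_pos (by omega : 0 < d.length)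
    simp only [length_cons] at hd_len
    -- `t` is `c ++ d`, with `s ++ c` and `x :: d` neutral, its first `n` entries merged by `F`
    refine ⟨F ((c ++ d₀ :: d').take n) :: (c ++ d₀ :: d').drop n,
      hF.isNeutral_of_isRightNeutral (by simp; omega) (fun y => ?_) hd.length_eq hd.left⟩
    calc F (y :: (x :: s ++ F ((c ++ d₀ :: d').take n) :: (c ++ d₀ :: d').drop n))
        = F ([y, x] ++ F (s ++ c ++ [d₀]) :: d') :=
          hF (y :: x :: s) _ _ _ _ _ (by simp; omega) (by simp; omega) (by simp; omega)
            (by simp)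
      _ = y := by rw [hc.left]; exact hd.right y

theorem IsListAssoc.exists_isNeutral_append_left (hF : IsListAssoc F n)
    (hc : HasNeutralCompletions F n) {s : List G} (hs₀ : s ≠ []) (hs : s.length < n - 1) :
    ∃ t, IsNeutral F n (t ++ s) := by
  obtain ⟨t, ht⟩ := hF.dual.exists_isNeutral_append hc.dual s.reverse (by simpa using hs₀)
    (by simpa using hs)
  exact ⟨t.reverse, isNeutral_dual.1 (by simpa using ht)⟩

theorem IsListAssoc.bijective_of_ne_nil (hF : IsListAssoc F n) (hc : HasNeutralCompletions F n)
    {a b : List G} (ha : a ≠ []) (hb : b ≠ []) (hab : a.length + b.length + 1 = n) :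
    Bijective fun z => F (a ++ z :: b) := by
  have ha' := length_pos_iff.2 ha
  have hb' := length_pos_iff.2 hb
  obtain ⟨a₁, ha₁⟩ := hF.exists_isNeutral_append hc a ha (by omega)
  obtain ⟨a₂, ha₂⟩ := hF.exists_isNeutral_append_left hc ha (by omega)
  obtain ⟨b₁, hb₁⟩ := hF.exists_isNeutral_append hc b hb (by omega)
  obtain ⟨b₂, hb₂⟩ := hF.exists_isNeutral_append_left hc hb (by omega)
  have := ha₁.length_eq; have := ha₂.length_eq; have := hb₁.length_eq; have := hb₂.length_eq
  simp only [length_append] at *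
  refine ⟨LeftInverse.injective (g := fun x => F (a₂ ++ x :: b₁)) fun z => ?_,
    RightInverse.surjective (g := fun x => F (a₁ ++ x :: b₂)) fun x => ?_⟩
  · calc F (a₂ ++ F (a ++ z :: b) :: b₁) = F ((a₂ ++ a) ++ F (z :: (b ++ b₁)) :: []) :=
          hF _ _ _ _ _ _ (by simp; omega) (by simp; omega) (by omega) (by simp)
      _ = z := by rw [hb₁.right]; exact ha₂.left z
  · calc F (a ++ F (a₁ ++ x :: b₂) :: b) = F ((a ++ a₁) ++ F (x :: (b₂ ++ b)) :: []) :=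
          hF _ _ _ _ _ _ (by simp; omega) (by simp; omega) (by omega) (by simp)
      _ = x := by rw [hb₂.right]; exact ha₁.left x

theorem IsListAssoc.bijective_cons (hF : IsListAssoc F n) (hc : HasNeutralCompletions F n)
    (hn : 3 ≤ n) {c : List G} (hcl : c.length = n - 1) : Bijective fun z => F (z :: c) := by
  obtain ⟨c₀, c', rfl⟩ := exists_cons_of_length_pos (by omega : 0 < c.length)
  obtain ⟨e, he⟩ := (hc c₀).1
  have he_len := he.length_eq
  simp only [length_cons] at hcl he_len
  -- prefixing the neutral `c₀ :: e` splits this translation into two at inner positions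
  have hcomp : (fun z => F (z :: c₀ :: c')) =
      (fun u => F ([c₀] ++ u :: c')) ∘ (fun z => F (e ++ z :: [c₀])) := by
    funext z
    calc F (z :: c₀ :: c') = F ((c₀ :: e) ++ [F (z :: c₀ :: c')]) := (he.left _).symm
      _ = F ([c₀] ++ F (e ++ z :: [c₀]) :: c') :=
        hF _ _ [] _ _ _ (by simp; omega) (by simp; omega) (by simp; omega) (by simp)
  rw [hcomp]
  exact (hF.bijective_of_ne_nil hc (by simp) (ne_nil_of_length_pos (by omega))
    (by simp; omega)).comp
    (hF.bijective_of_ne_nil hc (ne_nil_of_length_pos (by omega)) (by simp) (by simp; omega))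

theorem IsListAssoc.bijective_translate (hF : IsListAssoc F n) (hc : HasNeutralCompletions F n)
    (hn : 3 ≤ n) {a b : List G} (hab : a.length + b.length + 1 = n) :
    Bijective fun z => F (a ++ z :: b) := by
  rcases eq_or_ne a [] with rfl | ha
  · simpa using hF.bijective_cons hc hn (by simp at hab; omega)
  rcases eq_or_ne b [] with rfl | hb
  · simpa using hF.dual.bijective_cons hc.dual hn (c := a.reverse) (by simp at hab ⊢; omega)
  exact hF.bijective_of_ne_nil hc ha hb hab

theorem IsListAssoc.isRightNeutral_of_injective (hF : IsListAssoc F n) {s : List G}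
    (hs : s.length = n - 1) (hsl : IsLeftNeutral F s) (hinj : Injective fun z => F (z :: s)) :
    IsRightNeutral F s := by
  intro y
  rcases s with _ | ⟨s₀, s⟩
  · exact hsl y
  simp only [length_cons] at hs
  apply hinj
  calc F ([] ++ F (y :: s₀ :: s) :: s₀ :: s) = F ([y] ++ F (s₀ :: s ++ [s₀]) :: s) :=
        hF _ _ _ _ _ _ (by simp; omega) (by simp; omega) (by simp; omega) (by simp)
    _ = F (y :: s₀ :: s) := by rw [hsl]; rfl

theorem IsListAssoc.skewNeutral_of_injective (hF : IsListAssoc F n) (hn : 2 ≤ n)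
    (hinj : ∀ a b : List G, a.length + b.length + 1 = n → Injective fun z => F (a ++ z :: b))
    (hskew : ∀ x, F (x :: (replicate (n - 2) x ++ [bar x])) = x) :
    SkewNeutral F n bar (n - 2) 0 := by
  intro x
  have hl : IsLeftNeutral F (replicate (n - 2) x ++ [bar x]) := fun y => by
    apply hinj [x] (replicate (n - 2) x) (by simp; omega)
    calc F ([x] ++ F (replicate (n - 2) x ++ [bar x] ++ [y]) :: replicate (n - 2) x)
        = F ([] ++ F (x :: (replicate (n - 2) x ++ [bar x])) :: y :: replicate (n - 2) x) :=
          hF _ _ _ _ _ _ (by simp; omega) (by simp; omega) (by simp; omega) (by simp)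
      _ = F ([x] ++ y :: replicate (n - 2) x) := by rw [hskew]; rfl
  simp only [replicate_zero]
  exact ⟨by simp; omega, hl, hF.isRightNeutral_of_injective (by simp; omega) hl
    (by simpa using hinj [] _ (by simp; omega))⟩

end ListOperation

section Tuples

variable {n : ℕ} {f : (Fin n → G) → G}

theorem applyAt_congr {x y : ℕ → G} {p : ℕ} (hp : p < n) (h : ∀ k < 2 * n - 1, x k = y k) :
    applyAt n f x p = applyAt n f y p := by
  unfold applyAt
  congr 1; funext j
  have hj := j.isLt
  split_ifs
  · exact h _ (by omega)
  · congr 1; funext t; exact h _ (by omega)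
  · exact h _ (by omega)

variable [Inhabited G]

/-- Only lists of length `n` are meant: a shorter list is padded with `default`. -/
def evalList (f : (Fin n → G) → G) (l : List G) : G := f fun k => l.getI k

theorem applyAt_append {u v w : List G} (hv : v.length = n) (huw : u.length + w.length + 1 = n) :
    applyAt n f (fun k => (u ++ v ++ w).getI k) u.length = evalList f (u ++ evalList f v :: w) := by
  unfold applyAt evalList
  congr 1; funext j
  have hj := j.isLt
  rw [getI_eq_getElem _ (by simp; omega)]
  split_ifs with h₁ h₂ <;> dsimp only
  · rw [getI_eq_getElem _ (by simp; omega)]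
    simp [h₁]
  · simp only [getElem_append, getElem_cons, h₂]; simp
    congr 1; funext t
    have ht := t.isLt
    rw [getI_eq_getElem _ (by simp; omega), getI_eq_getElem _ (by omega)]
    simp [hv]
  · rw [getI_eq_getElem _ (by simp; omega)]
    simp only [getElem_append, getElem_cons, length_append]
    split_ifs <;> first | omega | (congr 1; omega)

theorem isNAssoc_iff : IsNAssoc n f ↔ IsListAssoc (evalList f) n := by
  constructor
  · intro h u v w u' v' w' hv hv' huw huvw
    have hlen := congrArg length huvw
    simp only [length_append] at hlen
    rw [← applyAt_append hv huw, ← applyAt_append hv' (by omega), huvw]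
    exact h _ _ (by omega) (by omega) _
  · intro h p q hp hq x
    set W := (range (2 * n - 1)).map x
    have hWlen : W.length = 2 * n - 1 := by simp [W]
    have hW : ∀ p < n, applyAt n f x p =
        evalList f (W.take p ++ evalList f ((W.drop p).take n) :: W.drop (p + n)) := by
      intro p hp
      have hsplit : W.take p ++ (W.drop p).take n ++ W.drop (p + n) = W := by
        rw [append_assoc, ← drop_drop, take_append_drop, take_append_drop]
      have hp' : (W.take p).length = p := by simp [hWlen]; omega
      rw [applyAt_congr hp (y := fun k => W.getI k) (fun k hk => ?_),
        ← applyAt_append (by simp [hWlen]; omega) (by simp [hWlen]; omega), hsplit, hp']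
      simp [W, getI_eq_getElem _ (show k < W.length by omega)]
    rw [hW p hp, hW q hq]
    exact h _ _ _ _ _ _ (by simp [hWlen]; omega) (by simp [hWlen]; omega)
      (by simp [hWlen]; omega) (by simp)

theorem isAssocSucc_zero_of_isAssocAt (h : IsAssocAt n f 0 1) : IsAssocSucc (evalList f) n 0 := by
  rintro u a v b w hu hv hw
  rw [eq_nil_of_length_eq_zero hu]
  have e₀ := applyAt_append (f := f) (u := []) (v := a :: v) (w := b :: w) (by simp; omega)
    (by simp; omega)
  have e₁ := applyAt_append (f := f) (u := [a]) (v := v ++ [b]) (w := w) (by simp; omega)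
    (by simp; omega)
  rw [show [] ++ a :: v ++ b :: w = [a] ++ (v ++ [b]) ++ w by simp] at e₀
  exact e₀.symm.trans ((h _).trans e₁)

theorem apply_ite_eq_evalList_set {l : List G} (hl : l.length = n) (p : ℕ) (z : G) :
    f (fun m => if (m : ℕ) = p then z else l.getI m) = evalList f (l.set p z) := by
  unfold evalList
  congr 1; funext m
  have hm := m.isLt
  rw [getI_eq_getElem (l.set p z) (by rw [length_set]; omega), getElem_set,
    getI_eq_getElem l (by omega)]
  split_ifs <;> first | rfl | omega

theorem isUSolv_iff {p : ℕ} (hp : p < n) :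
    IsUSolv n f p ↔ ∀ a b : List G, a.length = p → a.length + b.length + 1 = n →
      Bijective fun z => evalList f (a ++ z :: b) := by
  constructor
  · intro h a b ha hab
    have hset : ∀ z : G, (a ++ default :: b).set p z = a ++ z :: b := by
      intro z; subst ha; simp
    have hl : (a ++ default :: b).length = n := by simp; omega
    rw [bijective_iff_existsUnique]
    intro x₀
    simpa only [apply_ite_eq_evalList_set hl, hset] using
      h (fun m => (a ++ default :: b).getI m) x₀
  · intro h x x₀
    have hx : ∀ z : G, f (fun m => if (m : ℕ) = p then z else x m) =
        evalList f ((ofFn x).take p ++ z :: (ofFn x).drop (p + 1)) := by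
      intro z
      have hset : (ofFn x).set p z = (ofFn x).take p ++ z :: (ofFn x).drop (p + 1) := by
        rw [set_eq_take_append_cons_drop, if_pos (by simp; omega)]
      rw [← hset, ← apply_ite_eq_evalList_set (by simp)]
      congr! 2 with m
      rw [getI_eq_getElem _ (by simp)]; simp
    simp only [hx]
    exact (bijective_iff_existsUnique _).1 (h _ _ (by simp; omega) (by simp; omega)) x₀

theorem isNAryGroup_iff : IsNAryGroup n f ↔ IsListAssoc (evalList f) n ∧
    ∀ a b : List G, a.length + b.length + 1 = n → Bijective fun z => evalList f (a ++ z :: b) :=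
  and_congr isNAssoc_iff
    ⟨fun h a b hab => (isUSolv_iff (by omega)).1 (h _ (by omega)) a b rfl hab,
      fun h p hp => (isUSolv_iff hp).2 fun a b _ hab => h a b hab⟩

theorem evalList_replicate_append_singleton {k m : ℕ} (hkm : k + m + 2 = n) (x b y : G) :
    evalList f (replicate k x ++ b :: replicate m x ++ [y]) =
      f fun j => if (j : ℕ) = k then b else if (j : ℕ) = n - 1 then y else x := by
  unfold evalList
  congr 1; funext j
  have hj := j.isLt
  rw [getI_eq_getElem _ (by simp; omega)]
  simp only [getElem_append, getElem_replicate, getElem_cons, length_append, length_replicate,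
    length_cons]
  split_ifs <;> first | rfl | omega

theorem evalList_cons_replicate {k m : ℕ} (hkm : k + m + 2 = n) (x b y : G) :
    evalList f (y :: (replicate k x ++ b :: replicate m x)) =
      f fun j => if (j : ℕ) = 0 then y else if (j : ℕ) = k + 1 then b else x := by
  unfold evalList
  congr 1; funext j
  have hj := j.isLt
  rw [getI_eq_getElem _ (by simp; omega)]
  simp only [getElem_append, getElem_replicate, getElem_cons, length_replicate]
  split_ifs <;> first | rfl | omega

theorem isSkewOf_iff (hn : 2 ≤ n) (bar : G → G) :
    IsSkewOf n f bar ↔ ∀ x, evalList f (x :: (replicate (n - 2) x ++ [bar x])) = x := by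
  refine forall_congr' fun x => ?_
  have h := evalList_cons_replicate (f := f) (k := n - 2) (m := 0) (by omega) x (bar x) x
  rw [replicate_zero] at h
  rw [h]
  congr! 3 with j
  split_ifs <;> first | rfl | omega

end Tuples

end NAry

open NAry List in
/-- Dudek, 1980.
An `n`-ary groupoid `(G,f)` with a unary operation `x ↦ x̄` satisfies, for some fixed
`i, j ∈ {2,…,n}`, the two Dörnte identities together with the `(1,2)`-associative law
iff `(G,f)` is an `n`-ary group and `x̄` is the skew element of `x` for every `x`. -/
theorem nary_group_iff_minimal_identities {G : Type*} (n : ℕ) (hn : 2 < n)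
    (f : (Fin n → G) → G) (bar : G → G) :
    ((∃ i j : ℕ, 2 ≤ i ∧ i ≤ n ∧ 2 ≤ j ∧ j ≤ n ∧
        (∀ x y : G,
          f (fun m => if (m : ℕ) = i - 2 then bar x
              else if (m : ℕ) = n - 1 then y else x) = y) ∧
        (∀ x y : G,
          f (fun m => if (m : ℕ) = 0 then y
              else if (m : ℕ) = n - j + 1 then bar x else x) = y)) ∧
      IsAssocAt n f 0 1)
    ↔ (IsNAryGroup n f ∧ IsSkewOf n f bar) := by
  rcases isEmpty_or_nonempty G with _ | ⟨⟨g⟩⟩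
  · exact iff_of_true ⟨⟨2, 2, le_rfl, hn.le, le_rfl, hn.le, isEmptyElim, isEmptyElim⟩,
      fun x => isEmptyElim (x 0)⟩
      ⟨⟨fun _ _ _ _ x => isEmptyElim (x 0), fun _ _ x => isEmptyElim (x ⟨0, by omega⟩)⟩,
        isEmptyElim⟩
  let : Inhabited G := ⟨g⟩
  rw [isNAryGroup_iff, isSkewOf_iff (by omega)]
  constructor
  · rintro ⟨⟨i, j, hi, hin, hj, hjn, hA, hB⟩, h01⟩
    obtain ⟨hF, h₀, h₁⟩ := (isAssocSucc_zero_of_isAssocAt h01).isListAssoc_skewNeutral hn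
      (k := i - 2) (m := n - i) (k' := n - j) (m' := j - 2) (by omega) (by omega)
      (fun x y => (evalList_replicate_append_singleton (by omega) x (bar x) y).trans (hA x y))
      (fun x y => (evalList_cons_replicate (by omega) x (bar x) y).trans (hB x y))
    have hc := h₀.hasNeutralCompletions h₁ (by omega)
    exact ⟨⟨hF, fun a b => hF.bijective_translate hc hn⟩, fun x => by simpa using (h₁ x).right x⟩
  · rintro ⟨⟨hF, htr⟩, hskew⟩
    have h := hF.skewNeutral_of_injective (by omega)
      (fun a b hab => (htr a b hab).injective) hskew
    refine ⟨⟨n, 2, by omega, le_rfl, le_rfl, by omega, fun x y => ?_, fun x y => ?_⟩,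
      isNAssoc_iff.2 hF 0 1 (by omega) (by omega)⟩
    · rw [← evalList_replicate_append_singleton (f := f) (k := n - 2) (m := n - n)
        (by omega)]
      simpa using (h x).left y
    · rw [← evalList_cons_replicate (f := f) (k := n - 2) (m := 2 - 2) (by omega)]
      simpa using (h x).right y
end

section
/- Let n > 2, let (G,f) be an n-ary group, and let x ∈ G have finite n-ary order ord_n(x). Then the skew element x̄ is idempotent, i.e. ord_n(x̄) = 1 (equivalently f(x̄,…,x̄) = x̄), if and only if ord_n(x) is a divisor of n−2. -/
/-- `n`-ary powers: `x^{<0>} = x`, `x^{<k+1>} = f(x,…,x, x^{<k>})` (`n-1` copies of `x`). -/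
def nPow {G : Type*} (n : ℕ) (f : (Fin n → G) → G) (x : G) : ℕ → G
  | 0 => x
  | k + 1 => f (fun m => if (m : ℕ) = n - 1 then nPow n f x k else x)

/-!
With `L z = f(x, …, x, z)` we have `x^<k> = L^k x`, so `ord_n(x)` is the minimal period
of `x` under `L`. Associativity lets exponents move freely between the arguments of `f`, giving
`f(x^<k₁>, …, x^<kₙ>) = x^<k₁ + ⋯ + kₙ + 1>`. Unique solvability makes `L` injective, hence
`x̄ = x^<d-1>` for `d = ord_n(x)`, and `f(x̄, …, x̄) = x^<n(d-1)+1>`. This equals `x̄` iff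
`n(d-1) + 1 ≡ d - 1 (mod d)`, i.e. iff `d ∣ n - 2`.
-/

open Finset Function

theorem Function.iterate_eq_iterate_iff_modEq {α : Type*} {g : α → α} {x : α}
    (hx : x ∈ periodicPts g) {a b : ℕ} :
    g^[a] x = g^[b] x ↔ a ≡ b [MOD minimalPeriod g x] := by
  have hpos := minimalPeriod_pos_of_mem_periodicPts hx
  rw [← iterate_mod_minimalPeriod_eq (n := a), ← iterate_mod_minimalPeriod_eq (n := b)]
  exact iterate_eq_iterate_iff_of_lt_minimalPeriod (Nat.mod_lt _ hpos) (Nat.mod_lt _ hpos)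

theorem Nat.mul_sub_one_add_one_modEq_sub_one_iff {n d : ℕ} (hd : 0 < d) (hn : 2 ≤ n) :
    n * (d - 1) + 1 ≡ d - 1 [MOD d] ↔ d ∣ n - 2 := by
  rw [Nat.ModEq.comm, Nat.modEq_iff_dvd, ← Int.natCast_dvd_natCast]
  push_cast [Nat.cast_sub hd, Nat.cast_sub hn]
  rw [show (n * ((d : ℤ) - 1) + 1 - (d - 1)) = d * (n - 1) - (n - 2) by ring,
    dvd_sub_right (dvd_mul_right _ _)]

section NAryPowers

variable {G : Type*} {n : ℕ} (f : (Fin n → G) → G)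

def leftTransl (x : G) : G → G := fun z => f fun m => if (m : ℕ) = n - 1 then z else x

def rightTransl (x : G) : G → G := fun z => f fun m => if (m : ℕ) = 0 then z else x

theorem nPow_eq_iterate_leftTransl (x : G) (k : ℕ) : nPow n f x k = (leftTransl f x)^[k] x := by
  induction k with
  | zero => rfl
  | succ k ih => rw [iterate_succ_apply', ← ih]; rfl

variable {f}

theorem leftTransl_injective (hf : IsUSolv n f (n - 1)) (x : G) :
    Injective (leftTransl f x) := fun _ _ h =>
  (hf (fun _ => x) _).unique rfl h.symm

theorem commute_leftTransl_rightTransl (hn : 0 < n) (hf : IsNAssoc n f) (x : G) :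
    Function.Commute (leftTransl f x) (rightTransl f x) := by
  intro z
  dsimp only [leftTransl, rightTransl]
  have h := hf 0 (n - 1) (by omega) (by omega) fun t => if t = n - 1 then z else x
  simp only [applyAt] at h
  refine (congrArg f (funext fun j => ?_)).trans (h.symm.trans (congrArg f (funext fun j => ?_)))
  all_goals
    split_ifs <;> first | omega | rfl | (congr 1; funext t; split_ifs <;> first | omega | rfl)

theorem rightTransl_nPow (hn : 0 < n) (hf : IsNAssoc n f) (x : G) (k : ℕ) :
    rightTransl f x (nPow n f x k) = nPow n f x (k + 1) := by
  have hx : rightTransl f x x = leftTransl f x x := by simp only [rightTransl, leftTransl, ite_self]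
  rw [nPow_eq_iterate_leftTransl, nPow_eq_iterate_leftTransl, iterate_succ_apply, ← hx,
    ((commute_leftTransl_rightTransl hn hf x).iterate_left k).eq]

theorem apply_nPow_add_single_eq (hf : IsNAssoc n f) (x : G) (e : ℕ → ℕ) {i : ℕ}
    (hi : i + 1 < n) :
    f (fun j => nPow n f x ((e + Pi.single i 1 : ℕ → ℕ) j)) =
      f (fun j => nPow n f x ((e + Pi.single (i + 1) 1 : ℕ → ℕ) j)) := by
  -- associativity at places `i` and `i + 1` for the sequence
  -- `x^<e 0>, …, x^<e i>, x, …, x, x^<e (i+1)>, …, x^<e (n-1)>` with `n - 1` copies of `x`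
  set s : ℕ → G := fun t =>
    nPow n f x (if t ≤ i then e t else if t < i + n then 0 else e (t - (n - 1))) with hs
  have h := hf i (i + 1) (by omega) hi s
  have inner_i : f (fun t => s (i + t)) = nPow n f x (e i + 1) := by
    rw [← rightTransl_nPow (by omega) hf]
    refine congrArg f (funext fun t => ?_)
    simp only [hs]
    split_ifs <;> first | omega | rfl | (congr 1; grind)
  have inner_succ : f (fun t => s (i + 1 + t)) = nPow n f x (e (i + 1) + 1) := by
    refine congrArg f (funext fun t => ?_)
    simp only [hs]
    split_ifs <;> first | omega | rfl | (congr 1; grind)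
  simp only [applyAt, inner_i, inner_succ] at h
  refine (congrArg f (funext fun j => ?_)).trans (h.trans (congrArg f (funext fun j => ?_)))
  all_goals
    simp only [hs, Pi.add_apply, Pi.single_apply]
    split_ifs <;> first | omega | rfl | (congr 1; grind)

theorem apply_nPow_eq_nPow_sum (hn : 0 < n) (hf : IsNAssoc n f) (x : G) (e : ℕ → ℕ) :
    f (fun j => nPow n f x (e j)) = nPow n f x (∑ j ∈ range n, e j + 1) := by
  -- Shifting one unit of exponent one place to the right keeps the sum and lowers this weight
  -- by one; at weight zero all the exponent sits in the last place.
  obtain ⟨N, hN⟩ : ∃ N, ∑ j ∈ range n, (n - 1 - j) * e j = N := ⟨_, rfl⟩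
  induction N generalizing e with
  | zero =>
    have he : ∀ j < n - 1, e j = 0 := fun j hj => by
      have := (sum_eq_zero_iff.mp hN) j (mem_range.mpr (by omega))
      simpa [show n - 1 - j ≠ 0 by omega] using this
    have hsum : ∑ j ∈ range n, e j = e (n - 1) :=
      sum_eq_single (n - 1) (fun j hj _ => he j (by rw [mem_range] at hj; omega))
        (fun h => absurd (mem_range.mpr (by omega)) h)
    rw [hsum]
    refine congrArg f (funext fun j => ?_)
    split_ifs with hj
    · rw [hj]
    · rw [he j (by omega)]; rfl
  | succ N ih =>
    obtain ⟨i, -, hne⟩ := exists_ne_zero_of_sum_ne_zero (hN.trans_ne N.succ_ne_zero)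
    obtain ⟨hi, hei⟩ := mul_ne_zero_iff.mp hne
    obtain ⟨e₀, rfl⟩ : ∃ e₀ : ℕ → ℕ, e = e₀ + Pi.single i 1 :=
      ⟨e - Pi.single i 1, funext fun j => by
        rcases eq_or_ne j i with rfl | hj
        · simp only [Pi.add_apply, Pi.sub_apply, Pi.single_eq_same]; omega
        · simp [hj]⟩
    have hi' : i + 1 < n := by omega
    rw [apply_nPow_add_single_eq hf x e₀ hi', ih]
    · simp [sum_add_distrib, Pi.single_apply, hi', (lt_add_one i).trans hi']
    · simp only [Pi.add_apply, Pi.single_apply, mul_add, mul_ite, mul_one, mul_zero,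
        sum_add_distrib, sum_ite_eq', mem_range, (lt_add_one i).trans hi', ↓reduceIte, hi']
        at hN ⊢
      omega

theorem apply_const_nPow (hn : 0 < n) (hf : IsNAssoc n f) (x : G) (k : ℕ) :
    f (fun _ => nPow n f x k) = nPow n f x (n * k + 1) := by
  simpa using apply_nPow_eq_nPow_sum hn hf x fun _ => k

theorem sInf_nPow_eq_minimalPeriod (x : G) :
    sInf {k : ℕ | 0 < k ∧ nPow n f x k = x} = minimalPeriod (leftTransl f x) x := by
  simp_rw [minimalPeriod_eq_sInf_n_pos_IsPeriodicPt, nPow_eq_iterate_leftTransl]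
  rfl

theorem skew_eq_nPow_of_nPow_succ_eq {bar : G → G} (hf : IsUSolv n f (n - 1))
    (hbar : IsSkewOf n f bar) {x : G} {k : ℕ} (hx : nPow n f x (k + 1) = x) :
    bar x = nPow n f x k :=
  leftTransl_injective hf x ((hbar x).trans hx.symm)

end NAryPowers

/-- I.M. Dudek–W.A. Dudek, 1981.
If `x` has finite `n`-ary order, then the skew element `x̄` is idempotent
(`ord_n(x̄) = 1`) iff `ord_n(x)` divides `n-2`. -/
theorem skew_idempotent_iff_order_dvd {G : Type*} (n : ℕ) (hn : 2 < n)
    (f : (Fin n → G) → G) (hG : IsNAryGroup n f)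
    (bar : G → G) (hbar : IsSkewOf n f bar) (x : G)
    (hfin : ∃ k : ℕ, 0 < k ∧ nPow n f x k = x) :
    sInf {k : ℕ | 0 < k ∧ nPow n f (bar x) k = bar x} = 1 ↔
      sInf {k : ℕ | 0 < k ∧ nPow n f x k = x} ∣ (n - 2) := by
  obtain ⟨hassoc, hsolv⟩ := hG
  have hper : x ∈ periodicPts (leftTransl f x) := by
    obtain ⟨k, hk, hkx⟩ := hfin
    exact mk_mem_periodicPts hk (by rwa [nPow_eq_iterate_leftTransl] at hkx)
  rw [sInf_nPow_eq_minimalPeriod, sInf_nPow_eq_minimalPeriod, minimalPeriod_eq_one_iff_isFixedPt]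
  set d := minimalPeriod (leftTransl f x) x
  have hd : 0 < d := minimalPeriod_pos_of_mem_periodicPts hper
  have hbarx : bar x = nPow n f x (d - 1) := by
    refine skew_eq_nPow_of_nPow_succ_eq (hsolv (n - 1) (by omega)) hbar ?_
    rw [Nat.sub_add_cancel hd, nPow_eq_iterate_leftTransl]
    exact iterate_minimalPeriod
  have hfix : IsFixedPt (leftTransl f (bar x)) (bar x) ↔ f (fun _ => bar x) = bar x := by
    simp only [IsFixedPt, leftTransl, ite_self]
  rw [hfix, hbarx, apply_const_nPow (by omega) hassoc, nPow_eq_iterate_leftTransl,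
    nPow_eq_iterate_leftTransl, iterate_eq_iterate_iff_modEq hper]
  exact Nat.mul_sub_one_add_one_modEq_sub_one_iff hd hn.le
end
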